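/- arXiv:2203.04253 — 4 statements merged into one kernel-verified Lean document; each statement's English description precedes it below -/
import Mathlib

section
/- For every integer r ≥ 2, the oriented diameter of the triangular grid graph T_r is at least r + 1; that is, every strong orientation of T_r has diameter at least r + 1. -/
/-- Vertices of the triangular grid graph `T_r`: triples of nonnegative integers summing to `r`. -/
abbrev TriVert (r : ℕ) := {p : ℕ × ℕ × ℕ // p.1 + p.2.1 + p.2.2 = r}

/-- The triangular grid graph `T_r`: two triples are adjacent iff the sum of the absolute
differences of their coordinates equals `2`. -/
def triGrid (r : ℕ) : SimpleGraph (TriVert r) where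
  Adj p q :=
    |((p.1.1 : ℤ)) - (q.1.1 : ℤ)| + |((p.1.2.1 : ℤ)) - (q.1.2.1 : ℤ)|
      + |((p.1.2.2 : ℤ)) - (q.1.2.2 : ℤ)| = 2
  symm := by
    constructor
    intro p q h
    rw [abs_sub_comm ((q.1.1 : ℤ)), abs_sub_comm ((q.1.2.1 : ℤ)), abs_sub_comm ((q.1.2.2 : ℤ))]
    exact h
  loopless := by
    constructor
    intro p h
    simp at h

/-- `D` is an orientation of `G`: each edge gets exactly one of its two directions. -/
def IsOrientation {V : Type*} (G : SimpleGraph V) (D : V → V → Prop) : Prop :=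
  (∀ u v, D u v → G.Adj u v) ∧ ∀ u v, G.Adj u v → (D u v ↔ ¬ D v u)

/-- `f : Fin (k+1) → V` is a directed walk of length `k` from `u` to `v` in the digraph `D`. -/
def IsDiwalk {V : Type*} (D : V → V → Prop) {k : ℕ} (f : Fin (k + 1) → V) (u v : V) : Prop :=
  f 0 = u ∧ f (Fin.last k) = v ∧ ∀ i : Fin k, D (f i.castSucc) (f i.succ)

/-- A digraph is strong if every vertex is reachable from every other vertex. -/
def IsStrong {V : Type*} (D : V → V → Prop) : Prop :=
  ∀ u v : V, ∃ (k : ℕ) (f : Fin (k + 1) → V), IsDiwalk D f u v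

/-- Directed distance: the length of a shortest directed walk from `u` to `v`. -/
noncomputable def dirDist {V : Type*} (D : V → V → Prop) (u v : V) : ℕ :=
  sInf {k | ∃ f : Fin (k + 1) → V, IsDiwalk D f u v}

/-- Diameter of a digraph: maximum directed distance over ordered pairs of distinct vertices. -/
noncomputable def dirDiam {V : Type*} (D : V → V → Prop) : ℕ :=
  sSup {d | ∃ u v : V, u ≠ v ∧ d = dirDist D u v}


/-!
Write `B = (0, r, 0)`, `C = (0, 0, r)` and `M = (0, r - 1, 1)`. Along an edge of `T_r` the third
coordinate grows by at most one, so a directed walk of length at most `r` from `B` to `C` must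
raise it at every step; its first step therefore leaves `B` for a vertex with third coordinate `1`,
and since the first coordinate cannot grow on such a step, that vertex is `M`. Reading a walk of
length at most `r` from `C` to `B` backwards gives the same conclusion in the reversed digraph.
Hence both `B → M` and `M → B` would be arcs, which an orientation forbids.
-/

section Digraph

variable {V : Type*} {D : V → V → Prop}

theorem IsDiwalk.tail {k : ℕ} {f : Fin (k + 2) → V} {u v : V} (hf : IsDiwalk D f u v) :
    IsDiwalk D (fun i => f i.succ) (f 1) v :=
  ⟨rfl, hf.2.1, fun i => hf.2.2 i.succ⟩

theorem IsDiwalk.reverse {k : ℕ} {f : Fin (k + 1) → V} {u v : V} (hf : IsDiwalk D f u v) :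
    IsDiwalk (flip D) (f ∘ Fin.rev) v u := by
  obtain ⟨hu, hv, hstep⟩ := hf
  refine ⟨by simpa using hv, by simpa using hu, fun i => ?_⟩
  simpa [flip, Fin.rev_succ, Fin.rev_castSucc] using hstep i.rev

theorem IsDiwalk.le_add_length {φ : V → ℕ} (hφ : ∀ a b, D a b → φ b ≤ φ a + 1) {k : ℕ}
    {f : Fin (k + 1) → V} {u v : V} (hf : IsDiwalk D f u v) : φ v ≤ φ u + k := by
  induction k generalizing u with
  | zero =>
    obtain ⟨rfl, rfl, -⟩ := hf
    rfl
  | succ k ih =>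
    have hfirst : φ (f 1) ≤ φ u + 1 := hf.1 ▸ hφ _ _ (hf.2.2 0)
    have hrest := ih hf.tail
    omega

theorem IsStrong.exists_isDiwalk_dirDist (hD : IsStrong D) (u v : V) :
    ∃ f : Fin (dirDist D u v + 1) → V, IsDiwalk D f u v :=
  Nat.sInf_mem (hD u v)

theorem dirDist_le_dirDiam [Finite V] {u v : V} (huv : u ≠ v) : dirDist D u v ≤ dirDiam D := by
  refine le_csSup ?_ ⟨u, v, huv, rfl⟩
  refine ((Set.finite_range fun p : V × V => dirDist D p.1 p.2).subset ?_).bddAbove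
  rintro d ⟨u, v, -, rfl⟩
  exact ⟨(u, v), rfl⟩

end Digraph

namespace triGrid

instance (r : ℕ) : Finite (TriVert r) :=
  Set.Finite.to_subtype <|
    ((Set.finite_Iic r).prod ((Set.finite_Iic r).prod (Set.finite_Iic r))).subset
      fun p (hp : p.1 + p.2.1 + p.2.2 = r) => by simp only [Set.mem_prod, Set.mem_Iic]; omega

variable {r : ℕ} {p q : TriVert r}

theorem thd_le_succ_of_adj (h : (triGrid r).Adj p q) : q.1.2.2 ≤ p.1.2.2 + 1 := by
  have hsum := p.2.trans q.2.symm
  simp only [triGrid] at h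
  grind

theorem fst_le_of_adj_of_thd_eq_succ (h : (triGrid r).Adj p q) (hthd : q.1.2.2 = p.1.2.2 + 1) :
    q.1.1 ≤ p.1.1 := by
  have hsum := p.2.trans q.2.symm
  simp only [triGrid] at h
  grind

def cornerB (s : ℕ) : TriVert (s + 1) := ⟨(0, s + 1, 0), by simp⟩

def cornerC (s : ℕ) : TriVert (s + 1) := ⟨(0, 0, s + 1), by simp⟩

def nextToCornerB (s : ℕ) : TriVert (s + 1) := ⟨(0, s, 1), by simp⟩

theorem cornerB_ne_cornerC (s : ℕ) : cornerB s ≠ cornerC s := by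
  simp [cornerB, cornerC]

theorem rel_cornerB_nextToCornerB_of_isDiwalk {s : ℕ}
    {D : TriVert (s + 1) → TriVert (s + 1) → Prop}
    (hDG : ∀ u v, D u v → (triGrid (s + 1)).Adj u v) {k : ℕ} (hk : k ≤ s + 1)
    {f : Fin (k + 1) → TriVert (s + 1)} (hf : IsDiwalk D f (cornerB s) (cornerC s)) :
    D (cornerB s) (nextToCornerB s) := by
  cases k with
  | zero => exact absurd (hf.1.symm.trans hf.2.1) (cornerB_ne_cornerC s)
  | succ k =>
    have hstep : D (cornerB s) (f 1) := hf.1 ▸ hf.2.2 0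
    have hadj := hDG _ _ hstep
    have hthd_le : (f 1).1.2.2 ≤ 1 := thd_le_succ_of_adj hadj
    have hthd_ge : s + 1 ≤ (f 1).1.2.2 + k :=
      hf.tail.le_add_length (φ := fun p => p.1.2.2) fun a b hab =>
        thd_le_succ_of_adj (hDG a b hab)
    have hfst : (f 1).1.1 ≤ 0 :=
      fst_le_of_adj_of_thd_eq_succ hadj (by simp only [cornerB]; omega)
    have hsum := (f 1).2
    have hf1 : f 1 = nextToCornerB s := by
      ext <;> simp only [nextToCornerB] <;> omega
    exact hf1 ▸ hstep

end triGrid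

/-- For every integer `r ≥ 2`, every strong orientation of the triangular grid graph `T_r`
has diameter at least `r + 1`. -/
theorem triGrid_oriented_diameter_lower_bound (r : ℕ) (hr : 2 ≤ r)
    (D : TriVert r → TriVert r → Prop)
    (hD : IsOrientation (triGrid r) D) (hstrong : IsStrong D) :
    r + 1 ≤ dirDiam D := by
  obtain ⟨s, rfl⟩ : ∃ s, r = s + 1 := ⟨r - 1, by omega⟩
  by_contra! hsmall
  have hBC := dirDist_le_dirDiam (D := D) (triGrid.cornerB_ne_cornerC s)
  have hCB := dirDist_le_dirDiam (D := D) (triGrid.cornerB_ne_cornerC s).symm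
  obtain ⟨f, hf⟩ := hstrong.exists_isDiwalk_dirDist (triGrid.cornerB s) (triGrid.cornerC s)
  obtain ⟨g, hg⟩ := hstrong.exists_isDiwalk_dirDist (triGrid.cornerC s) (triGrid.cornerB s)
  have hBM : D (triGrid.cornerB s) (triGrid.nextToCornerB s) :=
    triGrid.rel_cornerB_nextToCornerB_of_isDiwalk hD.1 (by omega) hf
  have hMB : D (triGrid.nextToCornerB s) (triGrid.cornerB s) :=
    triGrid.rel_cornerB_nextToCornerB_of_isDiwalk (fun u v h => (hD.1 v u h).symm) (by omega)
      hg.reverse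
  exact (hD.2 _ _ (hD.1 _ _ hBM)).mp hBM hMB
end

section
/- For every integer r ≥ 2, every cycle of the triangular grid graph T_r that contains both of the vertices (0,r,0) and (0,0,r) has length at least 2r + 1, and there exists such a cycle of length exactly 2r + 1. -/
/-!
Every edge of `T_r` changes each coordinate by at most one. A cycle through the corners
`(0, r, 0)` and `(0, 0, r)` splits into two walks between them that share no other vertex, and
each has length at least `r` because the second coordinate drops from `r` to `0`. If both had
length exactly `r`, both would leave `(0, r, 0)` through `(0, r - 1, 1)`: the only other
neighbour `(1, r - 1, 0)` still has third coordinate `0`, hence lies at distance `r` from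
`(0, 0, r)`. A cycle of length `2r + 1` runs down the side `i = 0` and back up the line `i = 1`.
-/

namespace SimpleGraph.Walk

variable {V : Type*} {G : SimpleGraph V}

theorem natAbs_sub_le_length (f : V → ℤ)
    (hf : ∀ ⦃x y⦄, G.Adj x y → (f x - f y).natAbs ≤ 1) :
    ∀ {x y : V} (p : G.Walk x y), (f x - f y).natAbs ≤ p.length
  | _, _, nil => by simp
  | _, _, cons h p => by
    have := hf h
    have := natAbs_sub_le_length f hf p
    rw [length_cons]
    omega

theorem IsCycle.exists_internallyDisjoint_walks [DecidableEq V] {a u v : V} {c : G.Walk a a}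
    (hc : c.IsCycle) (hu : u ∈ c.support) (hv : v ∈ c.support) :
    ∃ p q : G.Walk u v, p.length + q.length = c.length ∧
      ∀ w ∈ p.support, w ∈ q.support → w = u ∨ w = v := by
  have hv' : v ∈ (c.rotate u hu).support := (mem_support_rotate_iff ..).mpr hv
  set p := (c.rotate u hu).takeUntil v hv'
  set q := (c.rotate u hu).dropUntil v hv'
  have hpq : p.append q = c.rotate u hu := take_spec _ hv'
  refine ⟨p, q.reverse, ?_, ?_⟩
  · rw [length_reverse, ← length_append, hpq, length_rotate]
  · have hnodup : (p.support.tail ++ q.support.tail).Nodup := by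
      rw [← tail_support_append, hpq]
      exact (hc.rotate hu).support_nodup
    intro w hwp hwq
    rw [support_reverse, List.mem_reverse, ← cons_tail_support] at hwq
    rw [← cons_tail_support] at hwp
    by_contra! hw
    exact List.disjoint_of_nodup_append hnodup ((List.mem_cons.mp hwp).resolve_left hw.1)
      ((List.mem_cons.mp hwq).resolve_left hw.2)

end SimpleGraph.Walk

namespace triGrid

open SimpleGraph Walk

variable {r : ℕ}

theorem adj_iff_natAbs {p q : TriVert r} : (triGrid r).Adj p q ↔
    ((p.1.1 : ℤ) - q.1.1).natAbs + ((p.1.2.1 : ℤ) - q.1.2.1).natAbs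
      + ((p.1.2.2 : ℤ) - q.1.2.2).natAbs = 2 := by
  simp only [triGrid, Int.abs_eq_natAbs]
  omega

theorem natAbs_sub_snd_le_length {x y : TriVert r} (p : (triGrid r).Walk x y) :
    ((x.1.2.1 : ℤ) - y.1.2.1).natAbs ≤ p.length :=
  p.natAbs_sub_le_length (fun v ↦ (v.1.2.1 : ℤ)) fun _ _ h ↦ by
    have := adj_iff_natAbs.mp h; omega

theorem natAbs_sub_thd_le_length {x y : TriVert r} (p : (triGrid r).Walk x y) :
    ((x.1.2.2 : ℤ) - y.1.2.2).natAbs ≤ p.length :=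
  p.natAbs_sub_le_length (fun v ↦ (v.1.2.2 : ℤ)) fun _ _ h ↦ by
    have := adj_iff_natAbs.mp h; omega

def vert (i j : ℕ) (h : i + j ≤ r) : TriVert r := ⟨(i, j, r - i - j), by dsimp only; omega⟩

@[simp] theorem vert_fst (i j h) : (vert (r := r) i j h).1.1 = i := rfl
@[simp] theorem vert_snd (i j h) : (vert (r := r) i j h).1.2.1 = j := rfl
@[simp] theorem vert_thd (i j h) : (vert (r := r) i j h).1.2.2 = r - i - j := rfl

theorem vert_zero_self : (vert 0 r (by simp) : TriVert r) = ⟨(0, r, 0), by simp⟩ := by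
  ext <;> simp [vert]

theorem vert_adj_vert_succ {i j : ℕ} (h : i + (j + 1) ≤ r) :
    (triGrid r).Adj (vert i (j + 1) h) (vert i j (by omega)) := by
  rw [adj_iff_natAbs]; simp only [vert_fst, vert_snd, vert_thd]; omega

theorem vert_mem_support_of_length_le (hr : 1 ≤ r)
    (p : (triGrid r).Walk (vert 0 r (by simp)) (vert 0 0 (by simp))) (hp : p.length ≤ r) :
    vert 0 (r - 1) (by omega) ∈ p.support := by
  have hne : ¬p.Nil := not_nil_of_ne fun h ↦ by
    have : r = 0 := congrArg (fun v : TriVert r ↦ v.1.2.1) h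
    omega
  have hadj := adj_iff_natAbs.mp (p.adj_snd hne)
  have hj := natAbs_sub_snd_le_length p.tail
  have hk := natAbs_sub_thd_le_length p.tail
  have hlen := p.length_tail_add_one hne
  have hw := p.snd.2
  have hsnd : p.snd = vert 0 (r - 1) (by omega) := by
    simp only [vert_fst, vert_snd, vert_thd] at hadj hj hk
    ext <;> simp only [vert_fst, vert_snd, vert_thd, tsub_zero] <;> omega
  exact hsnd ▸ List.mem_of_mem_tail (p.snd_mem_tail_support hne)

def descend (i : ℕ) :
    (j : ℕ) → (h : i + j ≤ r) → (triGrid r).Walk (vert i j h) (vert i 0 (by omega))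
  | 0, _ => nil
  | j + 1, h => cons (vert_adj_vert_succ h) (descend i j (by omega))

@[simp] theorem length_descend (i j : ℕ) (h : i + j ≤ r) : (descend i j h).length = j := by
  induction j with
  | zero => rfl
  | succ j ih => simp [descend, ih]

theorem coords_of_mem_support_descend {i j : ℕ} {h : i + j ≤ r} {v : TriVert r}
    (hv : v ∈ (descend i j h).support) : v.1.1 = i ∧ v.1.2.1 ≤ j := by
  induction j with
  | zero => simp_all [descend]
  | succ j ih =>
    rw [descend, support_cons, List.mem_cons] at hv
    rcases hv with rfl | hv
    · simp
    · exact (ih hv).imp_right (by omega)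

theorem isPath_descend (i j : ℕ) (h : i + j ≤ r) : (descend i j h).IsPath := by
  induction j with
  | zero => exact IsPath.nil
  | succ j ih =>
    refine (cons_isPath_iff _ _).mpr ⟨ih _, fun hv ↦ ?_⟩
    simpa using (coords_of_mem_support_descend hv).2

theorem exists_isCycle_length_eq_two_mul_add_one (hr : 2 ≤ r) :
    ∃ c : (triGrid r).Walk (vert 0 r (by simp)) (vert 0 r (by simp)), c.IsCycle ∧
      vert 0 0 (by simp) ∈ c.support ∧ c.length = 2 * r + 1 := by
  have hv : (triGrid r).Adj (vert 0 0 (by simp)) (vert 1 0 (by omega)) := by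
    rw [adj_iff_natAbs]; simp only [vert_fst, vert_snd, vert_thd]; omega
  have hu : (triGrid r).Adj (vert 1 (r - 1) (by omega)) (vert 0 r (by simp)) := by
    rw [adj_iff_natAbs]; simp only [vert_fst, vert_snd, vert_thd]; omega
  set down : (triGrid r).Walk _ _ := descend 0 r (by simp)
  have hdown : down.IsPath := isPath_descend ..
  set up := (descend 1 (r - 1) (by omega)).reverse.concat hu
  have mem_up {x : TriVert r} (hx : x ∈ up.support) : x.1.1 = 1 ∨ x = vert 0 r (by simp) := by
    rw [support_concat, support_reverse, List.mem_append,
      List.mem_reverse, List.mem_singleton] at hx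
    exact hx.imp_left fun hx ↦ (coords_of_mem_support_descend hx).1
  have hup : up.IsPath := by
    refine (isPath_reverse_iff _ |>.mpr (isPath_descend ..)).concat (fun hx ↦ ?_) hu
    rw [support_reverse, List.mem_reverse] at hx
    simpa using (coords_of_mem_support_descend hx).1
  refine ⟨down.append (cons hv up), hdown.isCycle_append ?_ ?_ ?_, ?_, ?_⟩
  · refine (cons_isPath_iff _ _).mpr ⟨hup, fun hx ↦ ?_⟩
    rcases mem_up hx with h | h
    · simp at h
    · have : 0 = r := congrArg (fun v : TriVert r ↦ v.1.2.1) h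
      omega
  · intro x hxd hxu
    have hx : x ∈ down.support ∧ x ≠ vert 0 r (by simp) := by
      have := hdown.support_nodup
      rw [← cons_tail_support, List.nodup_cons] at this
      exact ⟨List.mem_of_mem_tail hxd, fun h ↦ this.1 (h ▸ hxd)⟩
    rcases mem_up hxu with h | h
    · simp [(coords_of_mem_support_descend hx.1).1] at h
    · exact hx.2 h
  · left
    simp only [down, length_descend]
    omega
  · exact mem_support_append_iff .. |>.mpr (Or.inl (end_mem_support _))
  · simp only [down, up, length_append, length_descend, length_cons, length_concat,
      length_reverse]
    omega

theorem two_mul_add_one_le_length_of_isCycle (hr : 2 ≤ r) {a : TriVert r}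
    {c : (triGrid r).Walk a a} (hc : c.IsCycle) (hu : vert 0 r (by simp) ∈ c.support)
    (hv : vert 0 0 (by simp) ∈ c.support) :
    2 * r + 1 ≤ c.length := by
  obtain ⟨p, q, hlen, hpq⟩ := hc.exists_internallyDisjoint_walks hu hv
  by_contra! hshort
  have hp := natAbs_sub_snd_le_length p
  have hq := natAbs_sub_snd_le_length q
  simp only [vert_snd, Nat.cast_zero, sub_zero, Int.natAbs_natCast] at hp hq
  rcases hpq _ (vert_mem_support_of_length_le (by omega) p (by omega))
      (vert_mem_support_of_length_le (by omega) q (by omega)) with h | h <;>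
    · have := congrArg (fun v : TriVert r ↦ v.1.2.1) h
      simp only [vert_snd] at this
      omega

end triGrid

/-- For every integer `r ≥ 2`, every cycle of the triangular grid graph `T_r` containing both
vertices `(0, r, 0)` and `(0, 0, r)` has length at least `2r + 1`, and there exists such a
cycle of length exactly `2r + 1`. -/
theorem triGrid_cycle_through_corners (r : ℕ) (hr : 2 ≤ r) :
    (∀ (a : TriVert r) (c : (triGrid r).Walk a a), c.IsCycle →
        (⟨(0, r, 0), by simp⟩ : TriVert r) ∈ c.support →
        (⟨(0, 0, r), by simp⟩ : TriVert r) ∈ c.support →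
        2 * r + 1 ≤ c.length) ∧
      (∃ (a : TriVert r) (c : (triGrid r).Walk a a), c.IsCycle ∧
        (⟨(0, r, 0), by simp⟩ : TriVert r) ∈ c.support ∧
        (⟨(0, 0, r), by simp⟩ : TriVert r) ∈ c.support ∧
        c.length = 2 * r + 1) := by
  refine ⟨fun a c hc hu hv ↦
    triGrid.two_mul_add_one_le_length_of_isCycle hr hc (triGrid.vert_zero_self ▸ hu) hv, ?_⟩
  obtain ⟨c, hc, hv, hlen⟩ := triGrid.exists_isCycle_length_eq_two_mul_add_one hr
  exact ⟨_, c, hc, triGrid.vert_zero_self ▸ c.start_mem_support, hv, hlen⟩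
end

section
/- For every positive integer m, in the triangulated nested triangles graph G_{3m} the (undirected) shortest path distance between the vertices w_1 and v_m equals m. -/
/-- The triangulated nested triangles graph `G_{3m}` on vertex set `Fin m × Fin 3`, where
`(i, 0) = u_{i+1}`, `(i, 1) = v_{i+1}`, `(i, 2) = w_{i+1}`.  Its edges are the triangle
edges, the connector edges, and the diagonal edges `(v_i, w_{i+1})`, `(v_i, u_{i+1})`,
`(w_i, u_{i+1})`. -/
def nestedTriangles (m : ℕ) : SimpleGraph (Fin m × Fin 3) :=
  SimpleGraph.fromEdgeSet
    {e | (∃ (i : Fin m) (x y : Fin 3), x ≠ y ∧ e = s((i, x), (i, y))) ∨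
         (∃ i j : Fin m, (j : ℕ) = (i : ℕ) + 1 ∧
           ((∃ x : Fin 3, e = s((i, x), (j, x))) ∨
             e = s((i, 1), (j, 2)) ∨ e = s((i, 1), (j, 0)) ∨ e = s((i, 2), (j, 0))))}

/-- Potential function: layer index plus an extra `1` for `v`-vertices. -/
def phiNT {m : ℕ} (p : Fin m × Fin 3) : ℤ := (p.1 : ℤ) + (if p.2 = 1 then 1 else 0)

lemma phiNT_adj {m : ℕ} {a b : Fin m × Fin 3} (h : (nestedTriangles m).Adj a b) :
    phiNT a ≤ phiNT b + 1 ∧ phiNT b ≤ phiNT a + 1 := by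
  rw [nestedTriangles, SimpleGraph.fromEdgeSet_adj] at h
  obtain ⟨hmem, hne⟩ := h
  rcases hmem with ⟨i, x, y, hxy, he⟩ | ⟨i, j, hij, hc⟩
  · rw [Sym2.eq_iff] at he
    rcases he with ⟨ha, hb⟩ | ⟨ha, hb⟩ <;> subst ha <;> subst hb <;>
      simp only [phiNT] <;> split_ifs <;> omega
  · have hij' : (j : ℤ) = (i : ℤ) + 1 := by exact_mod_cast hij
    rcases hc with ⟨x, he⟩ | he | he | he <;>
    · rw [Sym2.eq_iff] at he
      rcases he with ⟨ha, hb⟩ | ⟨ha, hb⟩ <;> subst ha <;> subst hb <;>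
        simp only [phiNT] <;> split_ifs <;> omega

lemma phiNT_walk {m : ℕ} {a b : Fin m × Fin 3} (p : (nestedTriangles m).Walk a b) :
    phiNT a ≤ phiNT b + p.length ∧ phiNT b ≤ phiNT a + p.length := by
  induction p with
  | nil => simp
  | cons h p ih =>
    have hb := phiNT_adj h
    simp only [SimpleGraph.Walk.length_cons]
    push_cast
    omega

lemma adj_conn {m : ℕ} (k : ℕ) (h : k + 1 < m) :
    (nestedTriangles m).Adj (⟨k, by omega⟩, 2) (⟨k + 1, h⟩, 2) := by
  rw [nestedTriangles, SimpleGraph.fromEdgeSet_adj]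
  refine ⟨Or.inr ⟨⟨k, by omega⟩, ⟨k + 1, h⟩, rfl, Or.inl ⟨2, rfl⟩⟩,
    by simp [Prod.ext_iff, Fin.ext_iff]⟩

lemma adj_tri {m : ℕ} (k : ℕ) (h : k < m) :
    (nestedTriangles m).Adj (⟨k, h⟩, 2) (⟨k, h⟩, 1) := by
  rw [nestedTriangles, SimpleGraph.fromEdgeSet_adj]
  exact ⟨Or.inl ⟨⟨k, h⟩, 2, 1, by decide, rfl⟩, by simp [Prod.ext_iff]⟩

/-- The walk `w_1 → w_2 → ⋯ → w_{k+1}` along connector edges. -/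
def rowWalk (m : ℕ) : ∀ k : ℕ, (h : k < m) →
    (nestedTriangles m).Walk (⟨0, by omega⟩, 2) (⟨k, h⟩, 2)
  | 0, h => SimpleGraph.Walk.nil
  | (k+1), h => (rowWalk m k (by omega)).concat (adj_conn k h)

lemma rowWalk_length (m : ℕ) (k : ℕ) (h : k < m) : (rowWalk m k h).length = k := by
  induction k with
  | zero => rfl
  | succ k ih =>
    simp [rowWalk, SimpleGraph.Walk.length_concat, ih (by omega)]

/-- For every positive integer `m`, the distance between `w_1 = (0, 2)` and
`v_m = (m - 1, 1)` in the triangulated nested triangles graph `G_{3m}` equals `m`. -/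
theorem nestedTriangles_dist (m : ℕ) (hm : 0 < m) :
    (nestedTriangles m).dist (⟨0, hm⟩, 2) (⟨m - 1, by omega⟩, 1) = m := by
  set a : Fin m × Fin 3 := (⟨0, hm⟩, 2)
  set b : Fin m × Fin 3 := (⟨m - 1, by omega⟩, 1)
  have hub : (nestedTriangles m).dist a b ≤ m := by
    have h1 := SimpleGraph.dist_le
      ((rowWalk m (m - 1) (by omega)).concat (adj_tri (m - 1) (by omega)))
    rwa [SimpleGraph.Walk.length_concat, rowWalk_length, Nat.sub_add_cancel hm] at h1
  have hreach : (nestedTriangles m).Reachable a b :=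
    ⟨(rowWalk m (m - 1) (by omega)).concat (adj_tri (m - 1) (by omega))⟩
  obtain ⟨p, hp⟩ := hreach.exists_walk_length_eq_dist
  have := phiNT_walk p
  have hphia : phiNT a = 0 := by simp [phiNT, a]
  have hphib : phiNT b = (m : ℤ) - 1 + 1 := by
    simp [phiNT, b]
    omega
  omega
end

section
/- Let G be the graph G(a_1,…,a_n) constructed from positive integers a_1,…,a_n, with distinguished vertices s and t and with top edges (v_i, v_{i+1}) for 1 ≤ i ≤ n. For every strong orientation of G, every directed path P from s to t, and every directed path Q from t to s, the edge sets of P and Q partition the set of top edges: every top edge lies on P or on Q, and no top edge lies on both. -/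
/-- Vertices of the gadget graph `G(a₁,…,aₙ)`: top-row vertices `v i` and bottom-row
vertices `w i` for the columns `i = 0, …, n`, the subdivision vertices `s` and `t`, and the
inner-cycle vertices `d j`, `d' j` replacing the internal vertical edge at column `j + 1`
(for `j : Fin (n - 1)`). -/
inductive GV (n : ℕ) : Type
  | v (i : Fin (n + 1))
  | w (i : Fin (n + 1))
  | s
  | t
  | d (j : Fin (n - 1))
  | d' (j : Fin (n - 1))

/-- The internal column corresponding to the index `j : Fin (n - 1)` is column `j + 1`. -/
def GV.col {n : ℕ} (j : Fin (n - 1)) : Fin (n + 1) :=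
  ⟨(j : ℕ) + 1, by have := j.isLt; omega⟩

/-- The edges of the gadget graph `G(a₁,…,aₙ)`: the top edges `(v i, v (i+1))`, the bottom
edges `(w i, w (i+1))`, the subdivided left and right vertical edges through `s` resp. `t`,
and for each internal column the 4-cycle `v, d, w, d'`. -/
def gridEdges (n : ℕ) : Set (Sym2 (GV n)) :=
  {e | (∃ i : Fin n, e = s(GV.v i.castSucc, GV.v i.succ)) ∨
       (∃ i : Fin n, e = s(GV.w i.castSucc, GV.w i.succ)) ∨
       e = s(GV.s, GV.v 0) ∨ e = s(GV.s, GV.w 0) ∨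
       e = s(GV.t, GV.v (Fin.last n)) ∨ e = s(GV.t, GV.w (Fin.last n)) ∨
       (∃ j : Fin (n - 1),
         e = s(GV.d j, GV.v (GV.col j)) ∨ e = s(GV.d j, GV.w (GV.col j)) ∨
         e = s(GV.d' j, GV.v (GV.col j)) ∨ e = s(GV.d' j, GV.w (GV.col j)))}

/-- The gadget graph `G(a₁,…,aₙ)` (as an unweighted simple graph). -/
def gridGraph (n : ℕ) : SimpleGraph (GV n) := SimpleGraph.fromEdgeSet (gridEdges n)

/-- `f` is a directed path (a directed walk with no repeated vertex) from `u` to `v`. -/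
def IsDipath {V : Type*} (D : V → V → Prop) {k : ℕ} (f : Fin (k + 1) → V) (u v : V) : Prop :=
  IsDiwalk D f u v ∧ Function.Injective f

/-- The (undirected) edge `{x, y}` is traversed by the directed walk `f`. -/
def EdgeOnDiwalk {V : Type*} {k : ℕ} (f : Fin (k + 1) → V) (x y : V) : Prop :=
  ∃ j : Fin k, (f j.castSucc = x ∧ f j.succ = y) ∨ (f j.castSucc = y ∧ f j.succ = x)

/-!
Cut `G` between columns `i` and `i + 1`: only the top edge and the bottom edge cross the cut.
The dipath `P` crosses it left to right and `Q` right to left, and an orientation gives the two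
crossing edges opposite directions, so one of them is the top edge. If the top edge points right,
the only arc from the right side to the left one is the bottom edge, which a dipath can use only
once; so `Q`, which starts and ends on opposite sides, never enters the right side again after
leaving it, and cannot use the top edge. The case of a top edge pointing left is symmetric, with `P`.
-/

section Diwalk

variable {V : Type*} {D : V → V → Prop} {k : ℕ} {f : Fin (k + 1) → V} {S : Set V}

theorem IsOrientation.asymm {G : SimpleGraph V} (hD : IsOrientation G D) {u v : V}
    (huv : D u v) : ¬ D v u :=
  (hD.2 u v (hD.1 u v huv)).mp huv

theorem edgeOnDiwalk_comm {x y : V} : EdgeOnDiwalk f x y ↔ EdgeOnDiwalk f y x := by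
  simp only [EdgeOnDiwalk, or_comm]

theorem exists_exit_step {p q : Fin (k + 1)} (hpq : p ≤ q) (hp : f p ∈ S) (hq : f q ∉ S) :
    ∃ j : Fin k, p ≤ j.castSucc ∧ j.succ ≤ q ∧ f j.castSucc ∈ S ∧ f j.succ ∉ S := by
  induction q using Fin.induction with
  | zero => exact absurd (Fin.le_zero_iff.mp hpq ▸ hp) hq
  | succ j ih =>
    have hpj : p ≤ j.castSucc :=
      Fin.le_castSucc_iff.mpr (lt_of_le_of_ne hpq (by rintro rfl; exact hq hp))
    by_cases hj : f j.castSucc ∈ S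
    · exact ⟨j, hpj, le_rfl, hj, hq⟩
    · obtain ⟨j', hpj', hj'j, hj'S, hj'S'⟩ := ih hpj hj
      exact ⟨j', hpj', hj'j.trans (Fin.castSucc_le_succ j), hj'S, hj'S'⟩

theorem IsDiwalk.edgeOnDiwalk_or_of_cut {u v x y x' y' : V} (hf : IsDiwalk D f u v)
    (hu : u ∈ S) (hv : v ∉ S)
    (hcut : ∀ a b, D a b → a ∈ S → b ∉ S → (a = x ∧ b = y) ∨ (a = x' ∧ b = y')) :
    EdgeOnDiwalk f x y ∨ D x' y' := by
  obtain ⟨rfl, rfl, hstep⟩ := hf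
  obtain ⟨j, -, -, hjS, hjS'⟩ := exists_exit_step (Fin.zero_le _) hu hv
  rcases hcut _ _ (hstep j) hjS hjS' with ⟨hx, hy⟩ | ⟨hx', hy'⟩
  · exact .inl ⟨j, .inl ⟨hx, hy⟩⟩
  · exact .inr (hx' ▸ hy' ▸ hstep j)

theorem exit_tail_eq_of_cut {G : SimpleGraph V} (hD : IsOrientation G D) {x y x' y' : V}
    (hcut : ∀ a b, D a b → a ∈ S → b ∉ S → (a = x ∧ b = y) ∨ (a = x' ∧ b = y'))
    (hyx : D y x) : ∀ a b, D a b → a ∈ S → b ∉ S → a = x' := by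
  intro a b hab ha hb
  rcases hcut a b hab ha hb with ⟨rfl, rfl⟩ | ⟨rfl, -⟩
  · exact absurd hab (hD.asymm hyx)
  · rfl

theorem IsDipath.not_reenter_of_exit_tail_eq {u v x : V} (hf : IsDipath D f u v)
    (hu : u ∈ S) (hv : v ∉ S) (hexit : ∀ a b, D a b → a ∈ S → b ∉ S → a = x) (m : Fin k) :
    ¬ (f m.castSucc ∉ S ∧ f m.succ ∈ S) := by
  rintro ⟨hout, hin⟩
  obtain ⟨⟨rfl, rfl, hstep⟩, hinj⟩ := hf
  obtain ⟨j₁, -, hj₁m, hj₁S, hj₁S'⟩ := exists_exit_step (Fin.zero_le _) hu hout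
  obtain ⟨j₂, hmj₂, -, hj₂S, hj₂S'⟩ := exists_exit_step (Fin.le_last _) hin hv
  have hj : j₁ = j₂ := Fin.castSucc_injective _ <| hinj <|
    (hexit _ _ (hstep j₁) hj₁S hj₁S').trans (hexit _ _ (hstep j₂) hj₂S hj₂S').symm
  subst hj
  simp only [Fin.le_def, Fin.val_succ, Fin.val_castSucc] at hj₁m hmj₂
  omega

theorem IsDipath.not_edgeOnDiwalk_of_exit_tail_eq {G : SimpleGraph V} (hD : IsOrientation G D)
    {u v x a b : V} (hf : IsDipath D f u v) (hu : u ∈ S) (hv : v ∉ S)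
    (hexit : ∀ a b, D a b → a ∈ S → b ∉ S → a = x) (hab : D a b) (ha : a ∉ S) (hb : b ∈ S) :
    ¬ EdgeOnDiwalk f a b := by
  rintro ⟨m, ⟨hma, hmb⟩ | ⟨hmb, hma⟩⟩
  · exact hf.not_reenter_of_exit_tail_eq hu hv hexit m ⟨hma ▸ ha, hmb ▸ hb⟩
  · exact hD.asymm hab (hmb ▸ hma ▸ hf.1.2.2 m)

end Diwalk

namespace GV

def column {n : ℕ} : GV n → ℕ
  | .v i => i
  | .w i => i
  | .s => 0
  | .t => n
  | .d j => (j : ℕ) + 1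
  | .d' j => (j : ℕ) + 1

def leftOf {n : ℕ} (i : Fin n) : Set (GV n) := {x | x.column ≤ i}

end GV

open GV

theorem gridGraph_adj_top {n : ℕ} (i : Fin n) :
    (gridGraph n).Adj (.v i.castSucc) (.v i.succ) := by
  rw [gridGraph, SimpleGraph.fromEdgeSet_adj]
  exact ⟨.inl ⟨i, rfl⟩, by simp [Fin.ext_iff]⟩

theorem gridGraph_cut_left {n : ℕ} (i : Fin n) {a b : GV n} (h : (gridGraph n).Adj a b)
    (ha : a ∈ leftOf i) (hb : b ∉ leftOf i) :
    (a = .v i.castSucc ∧ b = .v i.succ) ∨ (a = .w i.castSucc ∧ b = .w i.succ) := by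
  rw [gridGraph, SimpleGraph.fromEdgeSet_adj] at h
  obtain ⟨hmem, -⟩ := h
  simp only [leftOf, Set.mem_ofPred_eq, not_le] at ha hb
  simp only [gridEdges, Set.mem_ofPred_eq, Sym2.eq, Sym2.rel_iff', Prod.mk.injEq,
    Prod.swap_prod_mk] at hmem
  rcases hmem with ⟨j, ⟨rfl, rfl⟩ | ⟨rfl, rfl⟩⟩ | ⟨j, ⟨rfl, rfl⟩ | ⟨rfl, rfl⟩⟩ |
    (⟨rfl, rfl⟩ | ⟨rfl, rfl⟩) | (⟨rfl, rfl⟩ | ⟨rfl, rfl⟩) | (⟨rfl, rfl⟩ | ⟨rfl, rfl⟩) |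
    (⟨rfl, rfl⟩ | ⟨rfl, rfl⟩) |
    ⟨j, (⟨rfl, rfl⟩ | ⟨rfl, rfl⟩) | (⟨rfl, rfl⟩ | ⟨rfl, rfl⟩) | (⟨rfl, rfl⟩ | ⟨rfl, rfl⟩) |
      (⟨rfl, rfl⟩ | ⟨rfl, rfl⟩)⟩ <;>
    simp only [column, Fin.val_castSucc, Fin.val_succ, GV.col, Fin.val_last,
      Fin.val_zero] at ha hb
  all_goals first
    | omega
    | (left; obtain rfl : j = i := Fin.ext (by omega); exact ⟨rfl, rfl⟩)
    | (right; obtain rfl : j = i := Fin.ext (by omega); exact ⟨rfl, rfl⟩)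

theorem gridGraph_cut_right {n : ℕ} (i : Fin n) {a b : GV n} (h : (gridGraph n).Adj a b)
    (ha : a ∈ (leftOf i)ᶜ) (hb : b ∉ (leftOf i)ᶜ) :
    (a = .v i.succ ∧ b = .v i.castSucc) ∨ (a = .w i.succ ∧ b = .w i.castSucc) :=
  (gridGraph_cut_left i h.symm (Set.notMem_compl_iff.mp hb) ha).imp And.symm And.symm

theorem gridGraph_top_edges_partition_general (n : ℕ)
    (D : GV n → GV n → Prop) (hD : IsOrientation (gridGraph n) D)
    {k : ℕ} (f : Fin (k + 1) → GV n) (hP : IsDipath D f GV.s GV.t)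
    {l : ℕ} (g : Fin (l + 1) → GV n) (hQ : IsDipath D g GV.t GV.s) :
    ∀ i : Fin n,
      (EdgeOnDiwalk f (GV.v i.castSucc) (GV.v i.succ) ∨
        EdgeOnDiwalk g (GV.v i.castSucc) (GV.v i.succ)) ∧
      ¬ (EdgeOnDiwalk f (GV.v i.castSucc) (GV.v i.succ) ∧
        EdgeOnDiwalk g (GV.v i.castSucc) (GV.v i.succ)) := by
  intro i
  have hcutL := fun a b hab => gridGraph_cut_left i (hD.1 a b hab)
  have hcutR := fun a b hab => gridGraph_cut_right i (hD.1 a b hab)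
  have hs : GV.s ∈ leftOf i := Nat.zero_le _
  have ht : GV.t ∉ leftOf i := by simp [leftOf, column]
  have hvL : GV.v i.castSucc ∈ leftOf i := by simp [leftOf, column]
  have hvR : GV.v i.succ ∉ leftOf i := by simp [leftOf, column]
  refine ⟨?_, fun ⟨hf, hg⟩ => ?_⟩
  · rcases hP.1.edgeOnDiwalk_or_of_cut hs ht hcutL with hf | hbot
    · exact .inl hf
    rcases hQ.1.edgeOnDiwalk_or_of_cut ht (not_not.mpr hs) hcutR with hg | hbot'
    · exact .inr (edgeOnDiwalk_comm.mp hg)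
    · exact absurd hbot' (hD.asymm hbot)
  by_cases htop : D (.v i.castSucc) (.v i.succ)
  · exact hQ.not_edgeOnDiwalk_of_exit_tail_eq hD ht (not_not.mpr hs)
      (exit_tail_eq_of_cut hD hcutR htop) htop (not_not.mpr hvL) hvR hg
  · have htop' := (hD.2 _ _ (gridGraph_adj_top i).symm).mpr htop
    exact hP.not_edgeOnDiwalk_of_exit_tail_eq hD hs ht (exit_tail_eq_of_cut hD hcutL htop')
      htop' hvR hvL (edgeOnDiwalk_comm.mp hf)

/-- In every strong orientation of the gadget graph `G(a₁,…,aₙ)`, every directed path `P`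
from `s` to `t` and every directed path `Q` from `t` to `s` partition the top edges:
each top edge lies on `P` or on `Q`, and none lies on both. -/
theorem gridGraph_top_edges_partition (n : ℕ) (a : Fin n → ℕ) (ha : ∀ i, 0 < a i)
    (D : GV n → GV n → Prop) (hD : IsOrientation (gridGraph n) D) (hstrong : IsStrong D)
    {k : ℕ} (f : Fin (k + 1) → GV n) (hP : IsDipath D f GV.s GV.t)
    {l : ℕ} (g : Fin (l + 1) → GV n) (hQ : IsDipath D g GV.t GV.s) :
    ∀ i : Fin n,
      (EdgeOnDiwalk f (GV.v i.castSucc) (GV.v i.succ) ∨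
        EdgeOnDiwalk g (GV.v i.castSucc) (GV.v i.succ)) ∧
      ¬ (EdgeOnDiwalk f (GV.v i.castSucc) (GV.v i.succ) ∧
        EdgeOnDiwalk g (GV.v i.castSucc) (GV.v i.succ)) :=
  gridGraph_top_edges_partition_general n D hD f hP g hQ
end
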